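/- Let p and q be probability mass functions on a finite set. Pinsker's inequality: D_TV(p‖q) ≤ √((1/2)·D_KL(p‖q)), where D_TV(p‖q) = (1/2)Σ|p(x) − q(x)| and D_KL(p‖q) = Σ p(x)·log(p(x)/q(x)). -/

import Mathlib

/-!
With `t = a / b`, the pointwise bound `(a - b)² / (a + 2b) ≤ (2/3)·(a log(a/b) - a + b)` is
`3 (t - 1)² ≤ 2 (t + 2) klFun t`, where `klFun t = t log t + 1 - t`. The difference of the two
sides vanishes at `t = 1` and has derivative `4 ((t + 1) log t - 2 (t - 1))`, which is increasing
and hence has the sign of `t - 1`. Cauchy–Schwarz with weights `p + 2q`, whose total mass is `3`,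
gives `(∑ |p - q|)² ≤ 3 ∑ (p - q)² / (p + 2q) ≤ 2 D_KL(p‖q)`.
-/

open Real Set InformationTheory

lemma hasDerivAt_add_one_mul_log_sub {x : ℝ} (hx : x ≠ 0) :
    HasDerivAt (fun x ↦ (x + 1) * log x - 2 * (x - 1)) (log x + x⁻¹ - 1) x := by
  have := ((((hasDerivAt_id x).add_const 1).mul (hasDerivAt_log hx)).sub
    (((hasDerivAt_id x).sub_const 1).const_mul 2))
  refine this.congr_deriv ?_
  simp only [id, add_mul, mul_inv_cancel₀ hx]
  ring

lemma monotoneOn_add_one_mul_log_sub :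
    MonotoneOn (fun x ↦ (x + 1) * log x - 2 * (x - 1)) (Ioi 0) := by
  have hderiv : ∀ x ∈ Ioi (0 : ℝ), HasDerivAt (fun x ↦ (x + 1) * log x - 2 * (x - 1))
      (log x + x⁻¹ - 1) x := fun x hx ↦ hasDerivAt_add_one_mul_log_sub (ne_of_gt hx)
  refine monotoneOn_of_hasDerivWithinAt_nonneg (convex_Ioi 0)
    (fun x hx ↦ (hderiv x hx).continuousAt.continuousWithinAt)
    (fun x hx ↦ (hderiv x (interior_subset hx)).hasDerivWithinAt) fun x hx ↦ ?_
  have := one_sub_inv_le_log_of_pos (interior_subset hx : (0 : ℝ) < x)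
  linarith

lemma hasDerivAt_two_mul_add_two_mul_klFun_sub {x : ℝ} (hx : x ≠ 0) :
    HasDerivAt (fun x ↦ 2 * (x + 2) * klFun x - 3 * (x - 1) ^ 2)
      (4 * ((x + 1) * log x - 2 * (x - 1))) x := by
  have := ((((hasDerivAt_id x).add_const 2).const_mul 2).mul (hasDerivAt_klFun hx)).sub
    ((((hasDerivAt_id x).sub_const 1).pow 2).const_mul 3)
  refine this.congr_deriv ?_
  simp only [id, klFun_apply]
  ring

lemma three_mul_sq_sub_one_le_mul_klFun {x : ℝ} (hx : 0 ≤ x) :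
    3 * (x - 1) ^ 2 ≤ 2 * (x + 2) * klFun x := by
  set g : ℝ → ℝ := fun x ↦ 2 * (x + 2) * klFun x - 3 * (x - 1) ^ 2 with hg
  set g' : ℝ → ℝ := fun x ↦ 4 * ((x + 1) * log x - 2 * (x - 1)) with hg'
  have hg_cont : Continuous g := by fun_prop
  have hg_deriv : ∀ y, 0 < y → HasDerivAt g (g' y) y :=
    fun y hy ↦ hasDerivAt_two_mul_add_two_mul_klFun_sub hy.ne'
  have hg'_one : g' 1 = 0 := by simp [hg']
  have hg'_mono : MonotoneOn g' (Ioi 0) := fun y hy z hz hyz ↦ by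
    have := monotoneOn_add_one_mul_log_sub hy hz hyz
    simp only [hg']
    linarith
  suffices g 1 ≤ g x by simpa [hg, klFun_one] using this
  rcases le_total x 1 with hx1 | hx1
  · refine antitoneOn_of_hasDerivWithinAt_nonpos (f' := g') (convex_Icc 0 1) hg_cont.continuousOn
      (fun y hy ↦ ?_) (fun y hy ↦ ?_) ⟨hx, hx1⟩ ⟨zero_le_one, le_rfl⟩ hx1
    all_goals rw [interior_Icc] at hy
    · exact (hg_deriv y hy.1).hasDerivWithinAt
    · exact hg'_one ▸ hg'_mono hy.1 (mem_Ioi.2 one_pos) hy.2.le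
  · refine monotoneOn_of_hasDerivWithinAt_nonneg (f' := g') (convex_Ici 1) hg_cont.continuousOn
      (fun y hy ↦ ?_) (fun y hy ↦ ?_) (mem_Ici.2 le_rfl) hx1 hx1
    all_goals rw [interior_Ici] at hy
    · exact (hg_deriv y (zero_lt_one.trans hy)).hasDerivWithinAt
    · exact hg'_one ▸ hg'_mono (mem_Ioi.2 one_pos) (mem_Ioi.2 (zero_lt_one.trans hy)) hy.le

lemma sq_sub_div_le_mul_log_div {a b : ℝ} (ha : 0 ≤ a) (hb : 0 < b) :
    (a - b) ^ 2 / (a + 2 * b) ≤ 2 / 3 * (a * log (a / b) - a + b) := by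
  set t := a / b with ht
  have ha_eq : a = t * b := (div_mul_cancel₀ a hb.ne').symm
  have ht_nonneg : 0 ≤ t := div_nonneg ha hb.le
  have hlhs : (a - b) ^ 2 / (a + 2 * b) = b * ((t - 1) ^ 2 / (t + 2)) := by
    rw [ha_eq]
    field_simp
  have hrhs : a * log (a / b) - a + b = b * klFun t := by
    rw [klFun_apply, ← ht, ha_eq]
    ring
  have hkl : (t - 1) ^ 2 / (t + 2) ≤ 2 / 3 * klFun t := by
    rw [div_le_iff₀ (by positivity)]
    linarith [three_mul_sq_sub_one_le_mul_klFun ht_nonneg]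
  rw [hlhs, hrhs, mul_left_comm]
  exact mul_le_mul_of_nonneg_left hkl hb.le

lemma Finset.sq_sum_le_sum_mul_sum_sq_div {ι : Type*} (s : Finset ι) {f g : ι → ℝ}
    (hg : ∀ i ∈ s, 0 ≤ g i) (hfg : ∀ i ∈ s, g i = 0 → f i = 0) :
    (∑ i ∈ s, f i) ^ 2 ≤ (∑ i ∈ s, g i) * ∑ i ∈ s, f i ^ 2 / g i := by
  refine Finset.sum_sq_le_sum_mul_sum_of_sq_le_mul s hg
    (fun i hi ↦ div_nonneg (sq_nonneg _) (hg i hi)) fun i hi ↦ ?_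
  rcases (hg i hi).eq_or_lt with hgi | hgi
  · simp [hfg i hi hgi.symm]
  · rw [mul_div_cancel₀ _ hgi.ne']

/-- Pinsker's inequality for probability mass functions on a finite set:
`D_TV(p‖q) ≤ √((1/2)·D_KL(p‖q))`. -/
theorem pinsker_finite {X : Type*} [Fintype X]
    (p q : X → ℝ)
    (hp_nonneg : ∀ x, 0 ≤ p x) (hp_sum : ∑ x, p x = 1)
    (hq_nonneg : ∀ x, 0 ≤ q x) (hq_sum : ∑ x, q x = 1)
    (habs : ∀ x, 0 < p x → 0 < q x) :
    (1 / 2) * ∑ x, |p x - q x| ≤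
      Real.sqrt ((1 / 2) * ∑ x, p x * Real.log (p x / q x)) := by
  have hp_zero : ∀ x, q x = 0 → p x = 0 := fun x hq ↦
    ((hp_nonneg x).lt_or_eq.resolve_left fun hp ↦ (habs x hp).ne' hq).symm
  have hcs : (∑ x, |p x - q x|) ^ 2 ≤
      (∑ x, (p x + 2 * q x)) * ∑ x, (p x - q x) ^ 2 / (p x + 2 * q x) := by
    simp_rw [← sq_abs (p _ - q _)]
    refine Finset.sq_sum_le_sum_mul_sum_sq_div _ (fun x _ ↦ ?_) fun x _ hw ↦ ?_
    · linarith [hp_nonneg x, hq_nonneg x]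
    · have hq : q x = 0 := by linarith [hp_nonneg x, hq_nonneg x]
      simp [hq, hp_zero x hq]
  have hweight_sum : ∑ x, (p x + 2 * q x) = 3 := by
    rw [Finset.sum_add_distrib, ← Finset.mul_sum, hp_sum, hq_sum]; norm_num
  have hpoint : ∀ x, (p x - q x) ^ 2 / (p x + 2 * q x) ≤
      2 / 3 * (p x * log (p x / q x) - p x + q x) := fun x ↦ by
    rcases (hq_nonneg x).eq_or_lt with hq | hq
    · simp [hp_zero x hq.symm, ← hq]
    · exact sq_sub_div_le_mul_log_div (hp_nonneg x) hq
  have hsum : ∑ x, (p x - q x) ^ 2 / (p x + 2 * q x) ≤ 2 / 3 * ∑ x, p x * log (p x / q x) :=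
    calc _ ≤ ∑ x, 2 / 3 * (p x * log (p x / q x) - p x + q x) :=
          Finset.sum_le_sum fun x _ ↦ hpoint x
      _ = _ := by
          rw [← Finset.mul_sum, Finset.sum_add_distrib, Finset.sum_sub_distrib, hp_sum, hq_sum]
          ring
  apply Real.le_sqrt_of_sq_le
  rw [hweight_sum] at hcs
  linarith
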